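/- Let A_i and A_j be symmetric 2n×2n real matrices. Then (J A_i v, A_j v) = 0 for all v ∈ ℝ^{2n} if and only if the matrices J A_i and J A_j commute: [J A_i, J A_j] = 0. Consequently, the restrictions H_i, H_j of the quadratic functions g_i(X) = (1/2)(A_i X_v, X_v) + x_0 x_{n+1} and g_j(X) = (1/2)(A_j X_v, X_v) + x_0 x_{n+1} to the coadjoint orbits M_{x_{n+1}} — where their Poisson bracket equals {H_i,H_j}(X) = x_{n+1} (J A_i X_v, A_j X_v) — are in involution on the orbits M_{x_{n+1}} if and only if [J A_i, J A_j] = 0. -/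

import Mathlib

/-!
For symmetric `A`, `B` and skew `J`, the form `v ↦ (J A v, B v)` is the quadratic form of
`-(A J B)`, so it vanishes identically iff `A J B` is symmetric, i.e. `A J B = B J A`.
As `J` is invertible, this is `J A J B = J B J A`.
-/

open Matrix

noncomputable section

/-- The canonical complex structure `J = [[0, -I],[I, 0]]` on `ℝ^{2n}`. -/
def Jmat (n : ℕ) : Matrix (Fin n ⊕ Fin n) (Fin n ⊕ Fin n) ℝ :=
  Matrix.fromBlocks 0 (-1) 1 0

theorem IsUnit.commute_mul_left_iff {M : Type*} [Monoid M] {j a b : M} (hj : IsUnit j) :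
    Commute (j * a) (j * b) ↔ a * j * b = b * j * a := by
  simp only [Commute, SemiconjBy, mul_assoc, hj.mul_right_inj]

section

variable {R m n : Type*} [Fintype m] [Fintype n]

theorem Matrix.mulVec_dotProduct_mulVec [CommSemiring R] (P Q : Matrix m n R) (v w : n → R) :
    (P *ᵥ v) ⬝ᵥ (Q *ᵥ w) = v ⬝ᵥ ((Pᵀ * Q) *ᵥ w) := by
  rw [← mulVec_mulVec, dotProduct_mulVec v, vecMul_transpose]

variable [CommRing R] [NoZeroDivisors R] [CharZero R] [DecidableEq m]

theorem Matrix.forall_dotProduct_mulVec_self_eq_zero_iff (M : Matrix m m R) :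
    (∀ v, v ⬝ᵥ (M *ᵥ v) = 0) ↔ Mᵀ = -M := by
  set F := toLinearMap₂' R (n := m) (m := m) (N₂ := R) (S₁ := R) (S₂ := R)
  have hflip : (F M).flip = F Mᵀ := LinearMap.ext₂ fun v w => by
    simp only [LinearMap.flip_apply, F, toLinearMap₂'_apply', dotProduct_mulVec, vecMul_transpose,
      dotProduct_comm]
  have hF : (F M).IsAlt ↔ F M = F (-Mᵀ) := by
    rw [LinearMap.isAlt_iff_eq_neg_flip, hflip, map_neg]
  rw [F.injective.eq_iff, eq_comm, neg_eq_iff_eq_neg] at hF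
  rw [← hF]
  simp only [LinearMap.IsAlt, F, toLinearMap₂'_apply']

theorem Matrix.forall_mulVec_dotProduct_mulVec_eq_zero_iff {J A B : Matrix m m R}
    (hJ : Jᵀ = -J) (hA : A.IsSymm) (hB : B.IsSymm) :
    (∀ v, ((J * A) *ᵥ v) ⬝ᵥ (B *ᵥ v) = 0) ↔ A * J * B = B * J * A := by
  have hform : (J * A)ᵀ * B = -(A * J * B) := by
    rw [transpose_mul, hA.eq, hJ, mul_neg, neg_mul, mul_assoc]
  have hskew : (-(A * J * B))ᵀ = B * J * A := by
    rw [transpose_neg, transpose_mul, transpose_mul, hA.eq, hB.eq, hJ, neg_mul, mul_neg, neg_neg,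
      mul_assoc]
  simp_rw [mulVec_dotProduct_mulVec, hform, forall_dotProduct_mulVec_self_eq_zero_iff, hskew,
    neg_neg, eq_comm]

end

theorem Jmat_transpose (n : ℕ) : (Jmat n)ᵀ = -Jmat n := by
  simp [Jmat, fromBlocks_transpose, fromBlocks_neg]

theorem Jmat_mul_self (n : ℕ) : Jmat n * Jmat n = -1 := by
  rw [Jmat, fromBlocks_multiply, ← fromBlocks_one, fromBlocks_neg]
  simp

theorem isUnit_Jmat (n : ℕ) : IsUnit (Jmat n) :=
  ⟨⟨Jmat n, -Jmat n, by rw [mul_neg, Jmat_mul_self, neg_neg],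
    by rw [neg_mul, Jmat_mul_self, neg_neg]⟩, rfl⟩

/-- For symmetric matrices `A_i, A_j`, one has `(J A_i v, A_j v) = 0` for all `v` iff
`[J A_i, J A_j] = 0`. Consequently, the restrictions `H_i, H_j` of the quadratic
functions `g_i, g_j` to the coadjoint orbits `M_{x_{n+1}}` — whose Poisson bracket at
`X` is `x_{n+1} (J A_i X_v, A_j X_v)` — are in involution on the orbits `M_{x_{n+1}}`
iff `[J A_i, J A_j] = 0`. -/
theorem quadratic_involution_iff_commute (n : ℕ)
    (Ai Aj : Matrix (Fin n ⊕ Fin n) (Fin n ⊕ Fin n) ℝ)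
    (hAi : Ai.IsSymm) (hAj : Aj.IsSymm) :
    ((∀ v : (Fin n ⊕ Fin n) → ℝ, ((Jmat n * Ai) *ᵥ v) ⬝ᵥ (Aj *ᵥ v) = 0)
      ↔ (Jmat n * Ai) * (Jmat n * Aj) = (Jmat n * Aj) * (Jmat n * Ai))
    ∧ ((∀ (c : ℝ) (v : (Fin n ⊕ Fin n) → ℝ),
          c * (((Jmat n * Ai) *ᵥ v) ⬝ᵥ (Aj *ᵥ v)) = 0)
      ↔ (Jmat n * Ai) * (Jmat n * Aj) = (Jmat n * Aj) * (Jmat n * Ai)) := by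
  have key := (forall_mulVec_dotProduct_mulVec_eq_zero_iff (Jmat_transpose n) hAi hAj).trans
    (isUnit_Jmat n).commute_mul_left_iff.symm
  refine ⟨key, Iff.trans ?_ key⟩
  exact ⟨fun h v => by simpa using h 1 v, fun h c v => by rw [h v, mul_zero]⟩
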